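/- Let X be a uniform space and E an entourage of X. Suppose x₀,…,x_{n-1},x is an E-chain and (x,y) ∈ E. Then the concatenated E-chain x, x_{n-1},…,x₁, x₀, x₁,…,x_{n-1}, x, y (the reverse of the given chain followed by the given chain extended by y) is E-homotopic with fixed endpoints to the two-point E-chain x, y. -/

import Mathlib

/-! Write the chain as `x₀ :: x₁ :: t`. The zig-zag then contains the backtrack `x₁, x₀, x₁`,
which two deletions collapse to `x₁`: what remains is the zig-zag of the shorter chain
`x₁ :: t`, so induction ends at the one-point chain `x`, whose zig-zag is `x, y`. -/

/-- A list `x₀, …, xₙ` of points of `X` is an `E`-chain if each consecutive pair of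
points `(xᵢ, xᵢ₊₁)` lies in `E`. -/
def IsEChain {X : Type*} (E : Set (X × X)) (l : List X) : Prop :=
  l.Chain' fun a b => (a, b) ∈ E

/-- A single move of an `E`-homotopy: insert one point into an `E`-chain (equivalently,
read backwards, delete one point), in such a way that the result is still an `E`-chain
and the endpoints (the first and the last point) are unchanged. -/
def EChainStep {X : Type*} (E : Set (X × X)) (l l' : List X) : Prop :=
  (∃ l₁ x l₂, l = l₁ ++ l₂ ∧ l' = l₁ ++ x :: l₂) ∧
    IsEChain E l ∧ IsEChain E l' ∧ l.head? = l'.head? ∧ l.getLast? = l'.getLast?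

/-- Two `E`-chains are `E`-homotopic (with fixed endpoints) if one can be obtained from
the other by a finite sequence of single-point insertions/deletions preserving the
endpoints; i.e. `EHomotopic E` is the equivalence relation generated by `EChainStep E`. -/
def EHomotopic {X : Type*} (E : Set (X × X)) : List X → List X → Prop :=
  Relation.EqvGen (EChainStep E)


section

open List

variable {X : Type*} {E : Set (X × X)}

lemma IsEChain.reverse (hsymm : ∀ x y : X, (x, y) ∈ E → (y, x) ∈ E) {l : List X}
    (h : IsEChain E l) : IsEChain E l.reverse :=
  isChain_reverse.2 <| h.imp fun a b => hsymm a b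

lemma IsEChain.reverse_append_cons (hsymm : ∀ x y : X, (x, y) ∈ E → (y, x) ∈ E)
    {a : X} {l l' : List X} (h : IsEChain E (a :: l ++ l')) :
    IsEChain E (l.reverse ++ a :: (l ++ l')) := by
  have hrev : IsEChain E (a :: l).reverse := IsEChain.reverse hsymm h.left_of_append
  rw [reverse_cons] at hrev
  exact isChain_split.2 ⟨hrev, h⟩

lemma eHomotopic_delete {l₁ l₂ : List X} {x : X} (h₁ : l₁ ≠ []) (h₂ : l₂ ≠ [])
    (h : IsEChain E (l₁ ++ l₂)) (hx : IsEChain E (l₁ ++ x :: l₂)) :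
    EHomotopic E (l₁ ++ x :: l₂) (l₁ ++ l₂) :=
  .symm _ _ <| .rel _ _ ⟨⟨l₁, x, l₂, rfl, rfl⟩, h, hx,
    by simp [head?_append_of_ne_nil _ h₁],
    by simp [getLast?_append, getLast?_cons, getLast?_eq_some_getLast h₂]⟩

/-- Delete `a` (the new junction `b, b` is allowed by reflexivity), then one copy of `b`. -/
lemma eHomotopic_backtrack (hrefl : ∀ x : X, (x, x) ∈ E) {l₁ l₂ : List X} {a b : X}
    (h₂ : l₂ ≠ []) (h : IsEChain E (l₁ ++ b :: a :: b :: l₂)) :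
    EHomotopic E (l₁ ++ b :: a :: b :: l₂) (l₁ ++ b :: l₂) := by
  obtain ⟨hl₁, -, hl₂⟩ := isChain_append_cons_cons.1 h
  have hbb : IsEChain E (l₁ ++ b :: b :: l₂) :=
    isChain_append_cons_cons.2 ⟨hl₁, hrefl b, hl₂.tail⟩
  have hb : IsEChain E (l₁ ++ b :: l₂) := isChain_split.2 ⟨hl₁, hl₂.tail⟩
  have hdel_a := eHomotopic_delete (l₁ := l₁ ++ [b]) (x := a) (by simp) (cons_ne_nil b l₂)
    (by simpa using hbb) (by simpa using h)
  have hdel_b := eHomotopic_delete (l₁ := l₁ ++ [b]) (by simp) h₂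
    (by simpa using hb) (by simpa using hbb)
  simpa [EHomotopic] using hdel_a.trans _ _ _ hdel_b

lemma eHomotopic_reverse_append_tail (hrefl : ∀ x : X, (x, x) ∈ E)
    (hsymm : ∀ x y : X, (x, y) ∈ E → (y, x) ∈ E) {y : X} :
    ∀ {c : List X} (hc : c ≠ []), IsEChain E (c ++ [y]) →
      EHomotopic E (c.reverse ++ c.tail ++ [y]) [c.getLast hc, y]
  | [a], _, _ => by simpa using .refl _
  | a :: b :: t, _, h => by
    have hback := eHomotopic_backtrack (l₁ := t.reverse) (a := a) (b := b) (l₂ := t ++ [y]) hrefl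
      (by simp) (by simpa using h.reverse_append_cons hsymm)
    have ih := eHomotopic_reverse_append_tail hrefl hsymm (c := b :: t) (by simp) h.tail
    simp only [reverse_cons, tail_cons, getLast_cons_cons, append_assoc, cons_append,
      nil_append] at ih ⊢
    exact hback.trans _ _ _ ih

end

/-- Let `c = x₀, …, x_{n-1}, x` be an `E`-chain and suppose `(x, y) ∈ E`.  Then the
concatenated chain `x, x_{n-1}, …, x₁, x₀, x₁, …, x_{n-1}, x, y` (the reverse of `c`
followed by `c` without its first point, followed by `y`) is `E`-homotopic with fixed
endpoints to the two-point chain `x, y`. -/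
theorem reverse_concat_extend_homotopic_short {X : Type*} [UniformSpace X]
    {E : Set (X × X)} (hE : E ∈ uniformity X)
    (hsymm : ∀ x y : X, (x, y) ∈ E → (y, x) ∈ E)
    (c : List X) (hc : c ≠ []) (hchain : IsEChain E c)
    (y : X) (hxy : (c.getLast hc, y) ∈ E) :
    EHomotopic E (c.reverse ++ c.tail ++ [y]) [c.getLast hc, y] := by
  have hchain_y : IsEChain E (c ++ [y]) :=
    hchain.append (List.isChain_singleton y) <| by
      simpa [List.getLast?_eq_some_getLast hc] using hxy
  exact eHomotopic_reverse_append_tail (fun _ => refl_mem_uniformity hE) hsymm hc hchain_y
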